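/- Let (σ_m)_{m≥1} be unitaries satisfying the braid relations, and suppose the strong operator limits α_i := sot-lim_m σ_{i+1}σ_{i+2}···σ_m exist for all i ≥ 0. Then for 0 ≤ i < j, α_i^* σ_{j+1} = σ_j α_i^*. -/

import Mathlib

/-!
The braid relations let `σ_j` pass through the word `σ_a ⋯ σ_m` (for `1 ≤ a ≤ j < m`) from the
right, coming out as `σ_{j+1}` on the left: it commutes past `σ_{j+2}, …, σ_m`, the relation
`σ_j σ_{j+1} σ_j = σ_{j+1} σ_j σ_{j+1}` turns it into `σ_{j+1}`, and this commutes past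
`σ_a, …, σ_{j-1}`. In the strong limit this gives `α_i σ_j = σ_{j+1} α_i`, and taking adjoints,
with `σ_j`, `σ_{j+1}` unitary, gives `α_i^* σ_{j+1} = σ_j α_i^*`.
-/

/-- The finite product `σ_a σ_{a+1} ⋯ σ_b` applied to a vector:
`chainWord σ a b x = σ a (σ (a+1) (⋯ (σ b x)))` (the identity if `a > b`). -/
def chainWord {H : Type*} [NormedAddCommGroup H] [InnerProductSpace ℂ H]
    (σ : ℕ → H ≃ₗᵢ[ℂ] H) (a b : ℕ) (x : H) : H :=
  (List.range' a (b + 1 - a)).foldr (fun i y => σ i y) x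

open Filter Topology
open scoped InnerProductSpace

section Words

variable {H : Type*} [NormedAddCommGroup H] [InnerProductSpace ℂ H] (σ : ℕ → H ≃ₗᵢ[ℂ] H)

theorem chainWord_of_le {a b : ℕ} (h : a ≤ b) (x : H) :
    chainWord σ a b x = σ a (chainWord σ (a + 1) b x) := by
  have hlen : b + 1 - a = (b - a) + 1 := by omega
  have hlen' : b + 1 - (a + 1) = b - a := by omega
  simp [chainWord, hlen, hlen', List.range'_succ]

theorem chainWord_succ_right {a b : ℕ} (h : a ≤ b + 1) (x : H) :
    chainWord σ a (b + 1) x = chainWord σ a b (σ (b + 1) x) := by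
  have hlen : b + 2 - a = (b + 1 - a) + 1 := by omega
  have hend : a + (b + 1 - a) = b + 1 := by omega
  simp only [chainWord]
  rw [hlen, List.range'_concat, List.foldr_append]
  simp only [one_mul, hend, List.foldr]

theorem chainWord_self_succ (j : ℕ) (x : H) :
    chainWord σ j (j + 1) x = σ j (σ (j + 1) x) := by
  simp [chainWord, show j + 1 + 1 - j = 2 by omega, List.range'_succ]

variable {σ}

theorem chainWord_succ_intertwines
    (hB1 : ∀ m : ℕ, 1 ≤ m → ∀ x : H,
      σ m (σ (m + 1) (σ m x)) = σ (m + 1) (σ m (σ (m + 1) x)))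
    (hB2 : ∀ m n : ℕ, 1 ≤ m → m + 2 ≤ n → ∀ x : H, σ m (σ n x) = σ n (σ m x))
    {a j : ℕ} (ha : 1 ≤ a) (haj : a ≤ j) (y : H) :
    chainWord σ a (j + 1) (σ j y) = σ (j + 1) (chainWord σ a (j + 1) y) := by
  induction haj using Nat.decreasingInduction with
  | self => rw [chainWord_self_succ, chainWord_self_succ, hB1 j ha]
  | of_succ a hlt ih =>
    rw [chainWord_of_le σ (by omega) (σ j y), chainWord_of_le σ (by omega) y, ih (by omega),
      hB2 a _ ha (by omega)]

theorem chainWord_intertwines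
    (hB1 : ∀ m : ℕ, 1 ≤ m → ∀ x : H,
      σ m (σ (m + 1) (σ m x)) = σ (m + 1) (σ m (σ (m + 1) x)))
    (hB2 : ∀ m n : ℕ, 1 ≤ m → m + 2 ≤ n → ∀ x : H, σ m (σ n x) = σ n (σ m x))
    {a j m : ℕ} (ha : 1 ≤ a) (haj : a ≤ j) (hjm : j + 1 ≤ m) (y : H) :
    chainWord σ a m (σ j y) = σ (j + 1) (chainWord σ a m y) := by
  induction m, hjm using Nat.le_induction generalizing y with
  | base => exact chainWord_succ_intertwines hB1 hB2 ha haj y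
  | succ m hm ih =>
    rw [chainWord_succ_right σ (by omega), chainWord_succ_right σ (by omega),
      ← hB2 j (m + 1) (by omega) (by omega), ih]

theorem intertwines_of_tendsto_chainWord
    (hB1 : ∀ m : ℕ, 1 ≤ m → ∀ x : H,
      σ m (σ (m + 1) (σ m x)) = σ (m + 1) (σ m (σ (m + 1) x)))
    (hB2 : ∀ m n : ℕ, 1 ≤ m → m + 2 ≤ n → ∀ x : H, σ m (σ n x) = σ n (σ m x))
    {A : H → H} {a j : ℕ} (hA : ∀ x, Tendsto (fun m => chainWord σ a m x) atTop (𝓝 (A x)))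
    (ha : 1 ≤ a) (haj : a ≤ j) (y : H) :
    A (σ j y) = σ (j + 1) (A y) := by
  have hwords : (fun m => chainWord σ a m (σ j y)) =ᶠ[atTop]
      fun m => σ (j + 1) (chainWord σ a m y) := by
    filter_upwards [eventually_ge_atTop (j + 1)] with m hm
    exact chainWord_intertwines hB1 hB2 ha haj hm y
  exact tendsto_nhds_unique ((hA (σ j y)).congr' hwords)
    (((σ (j + 1)).continuous.tendsto _).comp (hA y))

end Words

theorem ContinuousLinearMap.adjoint_intertwines_of_intertwines
    {H : Type*} [NormedAddCommGroup H] [InnerProductSpace ℂ H] [CompleteSpace H]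
    {A : H →L[ℂ] H} {U V : H ≃ₗᵢ[ℂ] H} (h : ∀ y, A (U y) = V (A y)) (x : H) :
    A.adjoint (V x) = U (A.adjoint x) := by
  refine ext_inner_left ℂ fun y => ?_
  have hAy : A y = V (A (U.symm y)) := by rw [← h, U.apply_symm_apply]
  calc ⟪y, A.adjoint (V x)⟫_ℂ = ⟪A (U.symm y), x⟫_ℂ := by
        rw [ContinuousLinearMap.adjoint_inner_right, hAy, LinearIsometryEquiv.inner_map_map]
    _ = ⟪y, U (A.adjoint x)⟫_ℂ := by
        rw [← ContinuousLinearMap.adjoint_inner_right, ← U.inner_map_map, U.apply_symm_apply]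

/-- Let `(σ m)_{m ≥ 1}` be unitaries satisfying the braid relations, and suppose the
strong operator limits `α i = sot-lim_m σ_{i+1} σ_{i+2} ⋯ σ_m` exist (as continuous
linear maps `α i`).  Then for `0 ≤ i < j` one has `α_i^* σ_{j+1} = σ_j α_i^*`. -/
theorem adjoint_intertwines_braid_generators
    {H : Type*} [NormedAddCommGroup H] [InnerProductSpace ℂ H] [CompleteSpace H]
    (σ : ℕ → H ≃ₗᵢ[ℂ] H)
    (hB1 : ∀ m : ℕ, 1 ≤ m → ∀ x : H,
      σ m (σ (m + 1) (σ m x)) = σ (m + 1) (σ m (σ (m + 1) x)))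
    (hB2 : ∀ m n : ℕ, 1 ≤ m → m + 2 ≤ n → ∀ x : H, σ m (σ n x) = σ n (σ m x))
    (α : ℕ → H →L[ℂ] H)
    (hα : ∀ (i : ℕ) (x : H),
      Filter.Tendsto (fun m => chainWord σ (i + 1) m x) Filter.atTop
        (nhds (α i x)))
    (i j : ℕ) (hij : i < j) (x : H) :
    ContinuousLinearMap.adjoint (α i) (σ (j + 1) x) =
      σ j (ContinuousLinearMap.adjoint (α i) x) :=
  (α i).adjoint_intertwines_of_intertwines
    (intertwines_of_tendsto_chainWord hB1 hB2 (hα i) le_add_self hij) x
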